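/- arXiv:1809.09362 — 11 statements merged into one kernel-verified Lean document; each statement's English description precedes it below -/
import Mathlib

section
/- Let n ≥ 3 and let t : ℕ → ℕ be the t-vector of a pseudoline arrangement of n lines (t_i = number of points of weight i), satisfying the identity ∑_{i≥2} C(i,2)·t_i = C(n,2) and Melchior's equality t_2 = 3 + ∑_{i≥4}(i-3)·t_i (simpliciality), and let f_2 = 1 + ∑_{i≥2}(i-1)·t_i be the number of chambers. If additionally 4·t_2 ≤ f_2 and t_3 ≥ 4, then t_2 ≤ (C(n,2) + 6)/7. -/
lemma split_sum (n : ℕ) (hn : 3 ≤ n) (f : ℕ → ℕ) :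
    ∑ i ∈ Finset.Icc 2 n, f i = f 2 + f 3 + ∑ i ∈ Finset.Icc 4 n, f i := by
  have h1 : Finset.Icc 2 n = Finset.Ico 2 (n+1) := by rw [Finset.Ico_add_one_right_eq_Icc]
  have h2 : Finset.Icc 4 n = Finset.Ico 4 (n+1) := by rw [Finset.Ico_add_one_right_eq_Icc]
  have h3 : ∑ i ∈ Finset.Ico 2 4, f i = f 2 + f 3 := by
    rw [show (4:ℕ) = 3 + 1 from rfl, Finset.sum_Ico_succ_top (by norm_num),
      show (3:ℕ) = 2 + 1 from rfl, Finset.sum_Ico_succ_top (by norm_num),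
      Finset.Ico_self, Finset.sum_empty, zero_add]
  rw [h1, h2, ← Finset.sum_Ico_consecutive f (by norm_num : 2 ≤ 4)
    (by omega : 4 ≤ n + 1), h3]

theorem stmt_0 (n : ℕ) (hn : 3 ≤ n) (t : ℕ → ℕ)
    (hsupp : ∀ i, n < i → t i = 0)
    (hpair : ∑ i ∈ Finset.Icc 2 n, Nat.choose i 2 * t i = Nat.choose n 2)
    (hmel : t 2 = 3 + ∑ i ∈ Finset.Icc 4 n, (i - 3) * t i)
    (f2 : ℕ) (hf2 : f2 = 1 + ∑ i ∈ Finset.Icc 2 n, (i - 1) * t i)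
    (h4 : 4 * t 2 ≤ f2) (ht3 : 4 ≤ t 3) :
    (t 2 : ℚ) ≤ ((Nat.choose n 2 : ℚ) + 6) / 7 := by
  rw [split_sum n hn] at hpair hf2
  set B := ∑ i ∈ Finset.Icc 4 n, (i - 1) * t i with hB
  set C := ∑ i ∈ Finset.Icc 4 n, (i - 3) * t i with hC
  set D := ∑ i ∈ Finset.Icc 4 n, Nat.choose i 2 * t i with hD
  have key : B + 3 * C ≤ D := by
    rw [Finset.mul_sum, ← Finset.sum_add_distrib]
    apply Finset.sum_le_sum
    intro i hi
    have h4i : 4 ≤ i := (Finset.mem_Icc.mp hi).1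
    obtain ⟨m, rfl⟩ := Nat.exists_eq_add_of_le h4i
    have e1 : (4 + m) - 1 = m + 3 := by omega
    have e2 : (4 + m) - 3 = m + 1 := by omega
    have hc : 4 * m + 6 ≤ (4 + m).choose 2 := by
      rw [Nat.choose_two_right, e1, Nat.le_div_iff_mul_le (by norm_num)]
      have hm : m ≤ m * m := by
        rcases Nat.eq_zero_or_pos m with h | h
        · simp [h]
        · exact Nat.le_mul_of_pos_left m h
      nlinarith [hm]
    calc ((4 + m) - 1) * t (4+m) + 3 * (((4+m) - 3) * t (4+m))
        = (4 * m + 6) * t (4+m) := by rw [e1, e2]; ring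
      _ ≤ (4+m).choose 2 * t (4+m) := Nat.mul_le_mul_right _ hc
  have hch2 : Nat.choose 2 2 = 1 := by decide
  have hch3 : Nat.choose 3 2 = 3 := by decide
  have hnat : 7 * t 2 ≤ n.choose 2 + 6 := by
    rw [hch2, hch3] at hpair
    omega
  rw [le_div_iff₀ (by norm_num : (0:ℚ) < 7)]
  have := (Nat.cast_le (α := ℚ)).mpr hnat
  push_cast at this ⊢
  linarith
end

section
/- Let t : ℕ → ℕ with t_i = 0 for all i > n, satisfying ∑_{i≥2} C(i,2)·t_i = C(n,2) and Melchior's equality t_2 = 3 + ∑_{i≥4}(i-3)·t_i, together with 4·t_2 ≤ f_2 where f_2 = 1 + ∑_{i≥2}(i-1)·t_i. Then t_3 ≥ 4 + ∑_{i≥5}(i-4)·t_i. -/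
theorem stmt_1 (n : ℕ) (t : ℕ → ℕ)
    (hsupp : ∀ i, n < i → t i = 0)
    (hpair : ∑ i ∈ Finset.Icc 2 n, Nat.choose i 2 * t i = Nat.choose n 2)
    (hmel : t 2 = 3 + ∑ i ∈ Finset.Icc 4 n, (i - 3) * t i)
    (f2 : ℕ) (hf2 : f2 = 1 + ∑ i ∈ Finset.Icc 2 n, (i - 1) * t i)
    (h4 : 4 * t 2 ≤ f2) :
    4 + ∑ i ∈ Finset.Icc 5 n, (i - 4) * t i ≤ t 3 := by
  subst hf2
  by_cases hn : 4 ≤ n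
  · have h23 : Finset.Icc 2 n = insert 2 (insert 3 (Finset.Icc 4 n)) := by
      ext i
      simp [Finset.mem_Icc, Finset.mem_insert]
      omega
    rw [h23, Finset.sum_insert (by simp [Finset.mem_Icc]),
      Finset.sum_insert (by simp [Finset.mem_Icc])] at h4
    have h1 : ∑ i ∈ Finset.Icc 4 n, (i - 1) * t i
        = ∑ i ∈ Finset.Icc 4 n, ((i - 3) * t i + 2 * t i) := by
      apply Finset.sum_congr rfl
      intro i hi
      simp only [Finset.mem_Icc] at hi
      have : i - 1 = (i - 3) + 2 := by omega
      rw [this]; ring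
    have h2 : ∑ i ∈ Finset.Icc 4 n, (i - 3) * t i
        = ∑ i ∈ Finset.Icc 4 n, ((i - 4) * t i + t i) := by
      apply Finset.sum_congr rfl
      intro i hi
      simp only [Finset.mem_Icc] at hi
      have : i - 3 = (i - 4) + 1 := by omega
      rw [this]; ring
    have h45 : Finset.Icc 4 n = insert 4 (Finset.Icc 5 n) := by
      ext i
      simp [Finset.mem_Icc, Finset.mem_insert]
      omega
    have h3 : ∑ i ∈ Finset.Icc 4 n, (i - 4) * t i
        = ∑ i ∈ Finset.Icc 5 n, (i - 4) * t i := by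
      rw [h45, Finset.sum_insert (by simp [Finset.mem_Icc])]
      simp
    rw [Finset.sum_add_distrib] at h1 h2
    rw [h3] at h2
    set A := ∑ i ∈ Finset.Icc 5 n, (i - 4) * t i with hA
    set T := ∑ i ∈ Finset.Icc 4 n, t i with hT
    have hT2 : ∑ i ∈ Finset.Icc 4 n, 2 * t i = 2 * T := (Finset.mul_sum _ _ _).symm
    omega
  · interval_cases n <;>
      simp_all [Finset.sum_Icc_succ_top, Finset.Icc_self] <;> omega
end

section
/- Let t : ℕ → ℕ be a t-vector satisfying ∑_{i≥2} C(i,2)·t_i = C(n,2) and the simplicial Melchior equality t_2 = 3 + ∑_{i≥4}(i-3)·t_i. Then 2·t_2 + t_3 + t_4/3 ≤ C(n,2)/3 + 5 (as rational numbers). -/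
theorem stmt_2 (n : ℕ) (t : ℕ → ℕ)
    (hsupp : ∀ i, n < i → t i = 0)
    (hpair : ∑ i ∈ Finset.Icc 2 n, Nat.choose i 2 * t i = Nat.choose n 2)
    (hmel : t 2 = 3 + ∑ i ∈ Finset.Icc 4 n, (i - 3) * t i) :
    2 * (t 2 : ℚ) + (t 3 : ℚ) + (t 4 : ℚ) / 3 ≤ (Nat.choose n 2 : ℚ) / 3 + 5 := by
  have key : 6 * t 2 + 3 * t 3 + t 4 ≤ Nat.choose n 2 + 15 := by
    rcases lt_or_ge n 4 with hn | hn
    · have h4 : t 4 = 0 := hsupp 4 hn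
      interval_cases n <;>
        simp_all [Finset.sum_Icc_succ_top, show Finset.Icc 4 3 = ∅ from rfl,
          show Finset.Icc 4 2 = ∅ from rfl, show Finset.Icc 4 1 = ∅ from rfl,
          show Finset.Icc 4 0 = ∅ from rfl, show Finset.Icc 2 1 = ∅ from rfl,
          show Finset.Icc 2 0 = ∅ from rfl] <;> omega
    · -- split the pair sum
      have hsplit : ∑ i ∈ Finset.Icc 2 n, Nat.choose i 2 * t i
          = t 2 + 3 * t 3 + ∑ i ∈ Finset.Icc 4 n, Nat.choose i 2 * t i := by
        have h1 : Finset.Icc 2 n = insert 2 (Finset.Icc 3 n) := by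
          ext x; simp [Finset.mem_Icc]; omega
        have h2 : Finset.Icc 3 n = insert 3 (Finset.Icc 4 n) := by
          ext x; simp [Finset.mem_Icc]; omega
        rw [h1, Finset.sum_insert (by simp), h2, Finset.sum_insert (by simp)]
        simp [Nat.choose]
        ring
      -- termwise bound on Icc 4 n
      have hterm : ∀ i ∈ Finset.Icc 4 n,
          5 * ((i - 3) * t i) + (if i = 4 then t i else 0) ≤ Nat.choose i 2 * t i := by
        intro i hi
        rw [Finset.mem_Icc] at hi
        rcases eq_or_lt_of_le hi.1 with h4 | h5
        · subst i; simp [Nat.choose]; omega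
        · simp only [if_neg (by omega : ¬ i = 4)]
          have : 5 * (i - 3) ≤ Nat.choose i 2 := by
            rw [Nat.choose_two_right, Nat.le_div_iff_mul_le (by norm_num)]
            obtain ⟨j, rfl⟩ : ∃ j, i = j + 5 := ⟨i - 5, by omega⟩
            have hj : j ≤ j * j := by
              rcases Nat.eq_zero_or_pos j with h | h
              · simp [h]
              · exact Nat.le_mul_of_pos_left j h
            have e1 : j + 5 - 3 = j + 2 := rfl
            have e2 : j + 5 - 1 = j + 4 := rfl
            rw [e1, e2]
            nlinarith [hj]
          calc 5 * ((i - 3) * t i) + 0 = (5 * (i - 3)) * t i := by ring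
            _ ≤ Nat.choose i 2 * t i := Nat.mul_le_mul_right _ this
      have hsum : ∑ i ∈ Finset.Icc 4 n, (5 * ((i - 3) * t i) + (if i = 4 then t i else 0))
          ≤ ∑ i ∈ Finset.Icc 4 n, Nat.choose i 2 * t i := Finset.sum_le_sum hterm
      rw [Finset.sum_add_distrib, Finset.sum_ite_eq' (Finset.Icc 4 n) 4 t,
        if_pos (by rw [Finset.mem_Icc]; omega), ← Finset.mul_sum] at hsum
      omega
  have hq : (6 * t 2 + 3 * t 3 + t 4 : ℚ) ≤ (Nat.choose n 2 : ℚ) + 15 := by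
    exact_mod_cast key
  push_cast at hq
  linarith
end

section
/- Let x ≥ 4 be a natural number, and suppose nonneg rationals n, t_2, t_3, t_x satisfy: t_2 - (x-3)·t_x - 3 = 0; t_2 + 3·t_3 + (x(x-1)/2)·t_x - n(n-1)/2 = 0; 2·t_2 - 3·t_3 = 0; 3·t_3 - x·t_x = 0; and t_2 > 0. Then x ∈ {4, 5}; moreover if x = 4 then n = 9, t_2 = 6, t_3 = 4, t_x = 3, and if x = 5 then n = 15, t_2 = 15, t_3 = 10, t_x = 6. -/
theorem stmt_4 (x : ℕ) (hx : 4 ≤ x) (n t2 t3 tx : ℚ)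
    (hn : 0 ≤ n) (h2 : 0 ≤ t2) (h3 : 0 ≤ t3) (hxx : 0 ≤ tx)
    (e1 : t2 - ((x : ℚ) - 3) * tx - 3 = 0)
    (e2 : t2 + 3 * t3 + ((x : ℚ) * ((x : ℚ) - 1) / 2) * tx - n * (n - 1) / 2 = 0)
    (e3 : 2 * t2 - 3 * t3 = 0)
    (e4 : 3 * t3 - (x : ℚ) * tx = 0)
    (hpos : 0 < t2) :
    (x = 4 ∨ x = 5) ∧
      (x = 4 → n = 9 ∧ t2 = 6 ∧ t3 = 4 ∧ tx = 3) ∧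
      (x = 5 → n = 15 ∧ t2 = 15 ∧ t3 = 10 ∧ tx = 6) := by
  have hxtx : (x : ℚ) * tx = 2 * t2 := by linarith
  have key : t2 * (6 - (x : ℚ)) = 3 * (x : ℚ) := by nlinarith [e1, hxtx]
  have hx5 : x ≤ 5 := by
    by_contra h
    push_neg at h
    have h6 : (6 : ℚ) ≤ (x : ℚ) := by exact_mod_cast h
    nlinarith
  interval_cases x
  · -- x = 4
    push_cast at e1 e2 e3 e4 key hxtx
    have ht2 : t2 = 6 := by linarith
    have htx : tx = 3 := by linarith
    have ht3 : t3 = 4 := by linarith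
    have hnn : (n - 9) * (n + 8) = 0 := by nlinarith
    have hn9 : n = 9 := by
      rcases mul_eq_zero.mp hnn with h | h
      · linarith
      · linarith
    exact ⟨Or.inl rfl, fun _ => ⟨hn9, ht2, ht3, htx⟩, fun h => by simp at h⟩
  · -- x = 5
    push_cast at e1 e2 e3 e4 key hxtx
    have ht2 : t2 = 15 := by linarith
    have htx : tx = 6 := by linarith
    have ht3 : t3 = 10 := by linarith
    have hnn : (n - 15) * (n + 14) = 0 := by nlinarith
    have hn15 : n = 15 := by
      rcases mul_eq_zero.mp hnn with h | h
      · linarith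
      · linarith
    exact ⟨Or.inr rfl, fun h => by simp at h, fun _ => ⟨hn15, ht2, ht3, htx⟩⟩
end

section
/- Let n ≥ 8 and let t : ℕ → ℕ be a t-vector with t_i = 0 for i > 5, satisfying ∑_{i≥2} C(i,2)·t_i = C(n,2), Melchior's inequality t_2 ≥ 3 + ∑_{i≥4}(i-3)·t_i, the real-rootedness bound 4·f_2 ≤ (n+1)² where f_2 = 1 + ∑_{i≥2}(i-1)·t_i, and the Hirzebruch-type inequality t_2 + (3/2)·t_3 ≥ 8 + t_4/2 + (5/2)·t_5. Then t_4/3 + t_5 ≥ ((n-5)² - 4)/24. -/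
theorem stmt_7 (n : ℕ) (hn : 8 ≤ n) (t : ℕ → ℕ)
    (hsupp : ∀ i, 5 < i → t i = 0)
    (hpair : ∑ i ∈ Finset.Icc 2 n, Nat.choose i 2 * t i = Nat.choose n 2)
    (hmel : 3 + ∑ i ∈ Finset.Icc 4 n, (i - 3) * t i ≤ t 2)
    (f2 : ℕ) (hf2 : f2 = 1 + ∑ i ∈ Finset.Icc 2 n, (i - 1) * t i)
    (hreal : 4 * f2 ≤ (n + 1) ^ 2)
    (hhirz : (t 2 : ℚ) + (3 / 2) * t 3 ≥ 8 + (t 4 : ℚ) / 2 + (5 / 2) * t 5) :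
    (t 4 : ℚ) / 3 + (t 5 : ℚ) ≥ (((n : ℚ) - 5) ^ 2 - 4) / 24 := by
  have hsub25 : Finset.Icc 2 5 ⊆ Finset.Icc 2 n := by
    apply Finset.Icc_subset_Icc_right; omega
  have hsub45 : Finset.Icc 4 5 ⊆ Finset.Icc 4 n := by
    apply Finset.Icc_subset_Icc_right; omega
  have h1 : ∑ i ∈ Finset.Icc 2 n, Nat.choose i 2 * t i
      = ∑ i ∈ Finset.Icc 2 5, Nat.choose i 2 * t i := by
    refine (Finset.sum_subset hsub25 ?_).symm
    intro i hi' hi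
    have : 5 < i := by simp [Finset.mem_Icc] at hi hi' ⊢; omega
    simp [hsupp i this]
  have h2 : ∑ i ∈ Finset.Icc 4 n, (i - 3) * t i
      = ∑ i ∈ Finset.Icc 4 5, (i - 3) * t i := by
    refine (Finset.sum_subset hsub45 ?_).symm
    intro i hi' hi
    have : 5 < i := by simp [Finset.mem_Icc] at hi hi' ⊢; omega
    simp [hsupp i this]
  have h3 : ∑ i ∈ Finset.Icc 2 n, (i - 1) * t i
      = ∑ i ∈ Finset.Icc 2 5, (i - 1) * t i := by
    refine (Finset.sum_subset hsub25 ?_).symm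
    intro i hi' hi
    have : 5 < i := by simp [Finset.mem_Icc] at hi hi' ⊢; omega
    simp [hsupp i this]
  rw [h1] at hpair
  rw [h2] at hmel
  rw [h3] at hf2
  have e1 : ∑ i ∈ Finset.Icc 2 5, Nat.choose i 2 * t i
      = t 2 + 3 * t 3 + 6 * t 4 + 10 * t 5 := by
    simp [Finset.sum_Icc_succ_top, Nat.choose]
  have e2 : ∑ i ∈ Finset.Icc 4 5, (i - 3) * t i = t 4 + 2 * t 5 := by
    simp [Finset.sum_Icc_succ_top]
  have e3 : ∑ i ∈ Finset.Icc 2 5, (i - 1) * t i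
      = t 2 + 2 * t 3 + 3 * t 4 + 4 * t 5 := by
    simp [Finset.sum_Icc_succ_top]
  rw [e1] at hpair
  rw [e2] at hmel
  rw [e3] at hf2
  subst hf2
  have hch : (Nat.choose n 2 : ℚ) = n * (n - 1) / 2 := by
    rw [Nat.cast_choose_two]
  have hpq : (t 2 : ℚ) + 3 * t 3 + 6 * t 4 + 10 * t 5 = n * (n - 1) / 2 := by
    rw [← hch]
    exact_mod_cast congrArg (Nat.cast : ℕ → ℚ) hpair
  have hmq : 3 + (t 4 : ℚ) + 2 * t 5 ≤ t 2 := by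
    have : ((3 + (t 4 + 2 * t 5) : ℕ) : ℚ) ≤ t 2 := by exact_mod_cast hmel
    push_cast at this; linarith
  have hrq : 4 * (1 + (t 2 : ℚ) + 2 * t 3 + 3 * t 4 + 4 * t 5) ≤ ((n : ℚ) + 1) ^ 2 := by
    have : ((4 * (1 + (t 2 + 2 * t 3 + 3 * t 4 + 4 * t 5)) : ℕ) : ℚ) ≤ ((n + 1 : ℕ) : ℚ) ^ 2 := by
      exact_mod_cast hreal
    push_cast at this; linarith
  nlinarith [hpq, hmq, hrq]
end

section
/- Under the hypotheses of the previous setting (t_i = 0 for i > 5, pair-counting identity, Melchior's inequality, 4f_2 ≤ (n+1)², and t_2 + (3/2)t_3 ≥ 8 + t_4/2 + (5/2)t_5, with n ≥ 8), one has n ≤ 185. -/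
theorem stmt_8 (n : ℕ) (hn : 8 ≤ n) (t : ℕ → ℕ)
    (hsupp : ∀ i, 5 < i → t i = 0)
    (hpair : ∑ i ∈ Finset.Icc 2 n, Nat.choose i 2 * t i = Nat.choose n 2)
    (hmel : 3 + ∑ i ∈ Finset.Icc 4 n, (i - 3) * t i ≤ t 2)
    (f2 : ℕ) (hf2 : f2 = 1 + ∑ i ∈ Finset.Icc 2 n, (i - 1) * t i)
    (hreal : 4 * f2 ≤ (n + 1) ^ 2)
    (hhirz : (t 2 : ℚ) + (3 / 2) * t 3 ≥ 8 + (t 4 : ℚ) / 2 + (5 / 2) * t 5) :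
    n ≤ 185 := by
  have hsub : Finset.Icc 2 5 ⊆ Finset.Icc 2 n :=
    Finset.Icc_subset_Icc_right (by omega)
  have key : ∀ g : ℕ → ℕ, ∑ i ∈ Finset.Icc 2 n, g i * t i
      = g 2 * t 2 + g 3 * t 3 + g 4 * t 4 + g 5 * t 5 := by
    intro g
    rw [← Finset.sum_subset hsub (fun i hi hnot => by
      have h5 : 5 < i := by
        simp only [Finset.mem_Icc] at hi hnot; omega
      rw [hsupp i h5, mul_zero])]
    show ∑ i ∈ Finset.Icc 2 5, g i * t i = _
    rw [show Finset.Icc 2 5 = {2,3,4,5} from rfl]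
    simp [Finset.sum_insert, Finset.mem_insert]; ring
  have hsub' : Finset.Icc 4 5 ⊆ Finset.Icc 4 n :=
    Finset.Icc_subset_Icc_right (by omega)
  have key' : ∑ i ∈ Finset.Icc 4 n, (i - 3) * t i = t 4 + 2 * t 5 := by
    rw [← Finset.sum_subset hsub' (fun i hi hnot => by
      have h5 : 5 < i := by
        simp only [Finset.mem_Icc] at hi hnot; omega
      rw [hsupp i h5, mul_zero])]
    rw [show Finset.Icc 4 5 = {4,5} from rfl]
    simp [Finset.sum_insert]
  rw [key] at hpair
  rw [key'] at hmel
  rw [key] at hf2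
  norm_num [Nat.choose] at hpair hf2
  -- cast to ℚ
  by_contra hbig
  push_neg at hbig
  have hN : (186 : ℚ) ≤ (n : ℚ) := by exact_mod_cast hbig
  have e1 : (t 2 : ℚ) + 3 * t 3 + 6 * t 4 + 10 * t 5 = (n : ℚ) * ((n : ℚ) - 1) / 2 := by
    rw [← Nat.cast_choose_two, ← hpair]; push_cast; ring
  have e2 : ((3 + (t 4 + 2 * t 5) : ℕ) : ℚ) ≤ ((t 2 : ℕ) : ℚ) := Nat.cast_le.2 hmel
  push_cast at e2
  have e3 : 4 * ((1 : ℚ) + t 2 + 2 * t 3 + 3 * t 4 + 4 * t 5) ≤ ((n : ℚ) + 1) ^ 2 := by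
    calc (4 : ℚ) * (1 + t 2 + 2 * t 3 + 3 * t 4 + 4 * t 5) = ((4 * f2 : ℕ) : ℚ) := by
          rw [hf2]; push_cast; ring
      _ ≤ (((n + 1) ^ 2 : ℕ) : ℚ) := by exact_mod_cast hreal
      _ = ((n : ℚ) + 1) ^ 2 := by push_cast; ring
  have hN2 : ((n : ℚ))^2 ≥ 190 * n - 744 := by nlinarith [mul_nonneg (by linarith : (0:ℚ) ≤ (n:ℚ) - 186) (by linarith : (0:ℚ) ≤ (n:ℚ) - 4)]
  have h2 := (Nat.cast_nonneg (t 2) : (0:ℚ) ≤ t 2)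
  have h3 := (Nat.cast_nonneg (t 3) : (0:ℚ) ≤ t 3)
  have h4 := (Nat.cast_nonneg (t 4) : (0:ℚ) ≤ t 4)
  have h5 := (Nat.cast_nonneg (t 5) : (0:ℚ) ≤ t 5)
  linarith [e1, e2, e3, hhirz, hN2, hN, h2, h3, h4, h5]
end

section
/- Let n ≥ 4, let m ≥ 3 and let t : ℕ → ℕ be a t-vector with t_i = 0 for i > m and t_m > 0, satisfying ∑_{i≥2} C(i,2)·t_i = C(n,2), Melchior's inequality t_2 ≥ 3 + ∑_{i≥4}(i-3)·t_i, and the bound 4·f_2 ≤ (n+1)² where f_2 = 1 + ∑_{i≥2}(i-1)·t_i. Then t_2 ≥ 3 + ((n-5)² - 4)/(4m - 8). -/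
theorem stmt_9 (n m : ℕ) (hn : 4 ≤ n) (hm : 3 ≤ m) (t : ℕ → ℕ)
    (hsupp : ∀ i, m < i → t i = 0) (htm : 0 < t m)
    (hpair : ∑ i ∈ Finset.Icc 2 n, Nat.choose i 2 * t i = Nat.choose n 2)
    (hmel : 3 + ∑ i ∈ Finset.Icc 4 n, (i - 3) * t i ≤ t 2)
    (f2 : ℕ) (hf2 : f2 = 1 + ∑ i ∈ Finset.Icc 2 n, (i - 1) * t i)
    (hreal : 4 * f2 ≤ (n + 1) ^ 2) :
    (t 2 : ℚ) ≥ 3 + (((n : ℚ) - 5) ^ 2 - 4) / (4 * (m : ℚ) - 8) := by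
  -- cast helper for sums with natural subtraction
  have hcast : ∀ (k : ℕ) (S : Finset ℕ), (∀ i ∈ S, k ≤ i) →
      ((∑ i ∈ S, (i - k) * t i : ℕ) : ℚ) = ∑ i ∈ S, ((i : ℚ) - k) * t i := by
    intro k S h
    rw [Nat.cast_sum]
    refine Finset.sum_congr rfl fun i hi => ?_
    rw [Nat.cast_mul, Nat.cast_sub (h i hi)]
  set S1 : ℚ := ∑ i ∈ Finset.Icc 4 n, ((i : ℚ) - 3) * t i with hS1
  set S2 : ℚ := ∑ i ∈ Finset.Icc 4 n, ((i : ℚ) - 1) * ((i : ℚ) - 3) * t i with hS2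
  -- Melchior in ℚ
  have hmelQ : 3 + S1 ≤ (t 2 : ℚ) := by
    have h := hcast 3 (Finset.Icc 4 n) (fun i hi => by
      have := (Finset.mem_Icc.mp hi).1; omega)
    have h2 : ((3 + ∑ i ∈ Finset.Icc 4 n, (i - 3) * t i : ℕ) : ℚ) ≤ ((t 2 : ℕ) : ℚ) :=
      Nat.cast_le.mpr hmel
    rw [Nat.cast_add, h] at h2
    push_cast at h2
    exact h2
  -- f2 in ℚ
  have hf2Q : (f2 : ℚ) = 1 + ∑ i ∈ Finset.Icc 2 n, ((i : ℚ) - 1) * t i := by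
    have h := hcast 1 (Finset.Icc 2 n) (fun i hi => by
      have := (Finset.mem_Icc.mp hi).1; omega)
    have h2 : (f2 : ℚ) = ((1 + ∑ i ∈ Finset.Icc 2 n, (i - 1) * t i : ℕ) : ℚ) := by
      exact_mod_cast congrArg (Nat.cast : ℕ → ℚ) hf2
    rw [h2, Nat.cast_add, h, Nat.cast_one]
  -- pair count in ℚ
  have hpairQ : ∑ i ∈ Finset.Icc 2 n, (i : ℚ) * ((i : ℚ) - 1) * t i
      = (n : ℚ) * ((n : ℚ) - 1) := by
    have h2 : ∑ i ∈ Finset.Icc 2 n, ((Nat.choose i 2 : ℚ)) * t i = (Nat.choose n 2 : ℚ) := by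
      exact_mod_cast hpair
    simp only [Nat.cast_choose_two] at h2
    have h3 : ∑ i ∈ Finset.Icc 2 n, (i : ℚ) * ((i : ℚ) - 1) * t i
        = 2 * ∑ i ∈ Finset.Icc 2 n, (i : ℚ) * ((i : ℚ) - 1) / 2 * t i := by
      rw [Finset.mul_sum]
      exact Finset.sum_congr rfl fun i _ => by ring
    rw [h3, h2]; ring
  -- split Icc 2 n = {2,3} ∪ Icc 4 n
  have hsplit : ∀ g : ℕ → ℚ, ∑ i ∈ Finset.Icc 2 n, g i
      = g 2 + g 3 + ∑ i ∈ Finset.Icc 4 n, g i := by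
    intro g
    have h23 : Finset.Icc 2 n = insert 2 (insert 3 (Finset.Icc 4 n)) := by
      ext x
      simp only [Finset.mem_Icc, Finset.mem_insert]
      omega
    have h1 : (2 : ℕ) ∉ insert 3 (Finset.Icc 4 n) := by
      simp [Finset.mem_Icc]
    have h2 : (3 : ℕ) ∉ Finset.Icc 4 n := by
      simp [Finset.mem_Icc]
    rw [h23, Finset.sum_insert h1, Finset.sum_insert h2]
    ring
  -- the key identity : S2 = t2 + n(n-1) - 3(f2 - 1)
  have e1 : ∑ i ∈ Finset.Icc 2 n, ((i : ℚ) - 1) * ((i : ℚ) - 3) * t i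
      = (∑ i ∈ Finset.Icc 2 n, (i : ℚ) * ((i : ℚ) - 1) * t i)
        - 3 * (∑ i ∈ Finset.Icc 2 n, ((i : ℚ) - 1) * t i) := by
    rw [Finset.mul_sum, ← Finset.sum_sub_distrib]
    exact Finset.sum_congr rfl fun i _ => by ring
  have e2 := hsplit (fun i => ((i : ℚ) - 1) * ((i : ℚ) - 3) * t i)
  have hB : S2 = (t 2 : ℚ) + (n : ℚ) * ((n : ℚ) - 1) - 3 * ((f2 : ℚ) - 1) := by
    have := e1
    rw [e2, hpairQ] at this
    have hf' : ∑ i ∈ Finset.Icc 2 n, ((i : ℚ) - 1) * t i = (f2 : ℚ) - 1 := by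
      linarith [hf2Q]
    rw [hf'] at this
    rw [hS2]
    push_cast at this ⊢
    linarith [this]
  -- upper bound S2 ≤ (m-1) * S1
  have hub : S2 ≤ ((m : ℚ) - 1) * S1 := by
    rw [hS1, hS2, Finset.mul_sum]
    refine Finset.sum_le_sum fun i hi => ?_
    have h4 : 4 ≤ i := (Finset.mem_Icc.mp hi).1
    by_cases him : i ≤ m
    · have hi3 : (1 : ℚ) ≤ (i : ℚ) - 3 := by
        have : (4 : ℚ) ≤ (i : ℚ) := by exact_mod_cast h4
        linarith
      have himQ : (i : ℚ) ≤ (m : ℚ) := by exact_mod_cast him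
      have ht : (0 : ℚ) ≤ (t i : ℚ) := by positivity
      have key : (0 : ℚ) ≤ ((m : ℚ) - (i : ℚ)) * (((i : ℚ) - 3) * (t i : ℚ)) :=
        mul_nonneg (by linarith) (mul_nonneg (by linarith) ht)
      nlinarith [key]
    · rw [hsupp i (by omega)]
      simp
  -- 4 f2 ≤ (n+1)^2 in ℚ
  have hrealQ : 4 * (f2 : ℚ) ≤ ((n : ℚ) + 1) ^ 2 := by exact_mod_cast hreal
  -- key inequality
  have hdenom : (0 : ℚ) < 4 * (m : ℚ) - 8 := by
    have : (3 : ℚ) ≤ (m : ℚ) := by exact_mod_cast hm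
    linarith
  have hkey : ((n : ℚ) - 5) ^ 2 - 4 ≤ S1 * (4 * (m : ℚ) - 8) := by nlinarith
  have hdiv : (((n : ℚ) - 5) ^ 2 - 4) / (4 * (m : ℚ) - 8) ≤ S1 :=
    (div_le_iff₀ hdenom).mpr hkey
  linarith
end

section
/- Let n ≥ 4 and let t : ℕ → ℕ be a t-vector of a pseudoline arrangement of n lines satisfying ∑_{i≥2} C(i,2)·t_i = C(n,2), Melchior's inequality t_2 ≥ 3 + ∑_{i≥4}(i-3)·t_i, and 4·f_2 ≤ (n+1)² where f_2 = 1 + ∑_{i≥2}(i-1)·t_i. Then t_2 ≥ ⌊n/2⌋ (Dirac–Motzkin bound). -/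
private lemma choose_two_mul_two (k : ℕ) : k.choose 2 * 2 = k * (k - 1) := by
  induction k with
  | zero => rfl
  | succ k ih =>
    rw [Nat.choose_succ_succ, Nat.choose_one_right, Nat.add_mul, ih, Nat.succ_sub_one]
    cases k with
    | zero => rfl
    | succ j =>
      simp only [Nat.succ_sub_one]
      ring

private lemma choose_two_int (k : ℕ) (hk : 1 ≤ k) :
    ((k.choose 2 : ℕ) : ℤ) * 2 = (k : ℤ) * ((k : ℤ) - 1) := by
  have h := congrArg (fun x : ℕ => (x : ℤ)) (choose_two_mul_two k)
  push_cast [Nat.cast_sub hk] at h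
  linarith

set_option maxHeartbeats 1000000 in
theorem stmt_10 (n : ℕ) (hn : 4 ≤ n) (t : ℕ → ℕ)
    (hsupp : ∀ i, n < i → t i = 0)
    (hpair : ∑ i ∈ Finset.Icc 2 n, Nat.choose i 2 * t i = Nat.choose n 2)
    (hmel : 3 + ∑ i ∈ Finset.Icc 4 n, (i - 3) * t i ≤ t 2)
    (f2 : ℕ) (hf2 : f2 = 1 + ∑ i ∈ Finset.Icc 2 n, (i - 1) * t i)
    (hreal : 4 * f2 ≤ (n + 1) ^ 2) :
    n / 2 ≤ t 2 := by
  -- Melchior gives t 2 ≥ 3 always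
  have ht3 : 3 ≤ t 2 := le_trans (Nat.le_add_right 3 _) hmel
  by_cases hn8 : n ≤ 7
  · omega
  push_neg at hn8
  -- n ≥ 8 from here on; maximum multiplicity m
  have hne : ((Finset.Icc 2 n).filter (fun i => t i ≠ 0)).Nonempty := by
    by_contra h
    rw [Finset.not_nonempty_iff_eq_empty, Finset.filter_eq_empty_iff] at h
    have hz : ∑ i ∈ Finset.Icc 2 n, Nat.choose i 2 * t i = 0 := by
      apply Finset.sum_eq_zero
      intro i hi
      have := h hi
      simp only [ne_eq, not_not] at this
      simp [this]
    rw [hpair] at hz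
    have : 0 < n.choose 2 := Nat.choose_pos (by omega)
    omega
  obtain ⟨m, hmdef⟩ : ∃ m : ℕ, m = ((Finset.Icc 2 n).filter (fun i => t i ≠ 0)).max' hne :=
    ⟨_, rfl⟩
  have hm_mem : m ∈ (Finset.Icc 2 n).filter (fun i => t i ≠ 0) :=
    hmdef ▸ Finset.max'_mem _ hne
  rw [Finset.mem_filter, Finset.mem_Icc] at hm_mem
  obtain ⟨⟨hm2, hmn⟩, hmne⟩ := hm_mem
  have hmax : ∀ i, 2 ≤ i → i ≤ n → t i ≠ 0 → i ≤ m := by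
    intro i h1 h2 h3
    rw [hmdef]
    apply Finset.le_max'
    rw [Finset.mem_filter, Finset.mem_Icc]
    exact ⟨⟨h1, h2⟩, h3⟩
  by_cases hcase : n ≤ 2 * m
  · -- large m: Melchior gives t 2 ≥ m directly
    have hm4 : 4 ≤ m := by omega
    have h1 : (m - 3) * t m ≤ ∑ i ∈ Finset.Icc 4 n, (i - 3) * t i := by
      apply Finset.single_le_sum (f := fun i => (i - 3) * t i)
      · intro i _; exact Nat.zero_le _
      · rw [Finset.mem_Icc]; exact ⟨hm4, hmn⟩
    have h2 : m - 3 ≤ (m - 3) * t m :=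
      Nat.le_mul_of_pos_right _ (Nat.pos_of_ne_zero hmne)
    have h3 : 3 + (m - 3) ≤ t 2 :=
      le_trans (Nat.add_le_add_left (le_trans h2 h1) 3) hmel
    omega
  push_neg at hcase
  -- small m case: work over ℤ
  obtain ⟨A, hA⟩ : ∃ x : ℤ, x = ∑ i ∈ Finset.Icc 2 n, ((i : ℤ) - 1) * t i := ⟨_, rfl⟩
  obtain ⟨B, hB⟩ : ∃ x : ℤ, x = ∑ i ∈ Finset.Icc 2 n, ((i : ℤ) - 1) ^ 2 * t i := ⟨_, rfl⟩
  obtain ⟨S, hS⟩ : ∃ x : ℤ, x = ∑ i ∈ Finset.Icc 4 n, ((i : ℤ) - 3) * t i := ⟨_, rfl⟩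
  -- pair count in ℤ
  have hBA : B + A = (n : ℤ) * ((n : ℤ) - 1) := by
    have h2 : (2 : ℤ) * ∑ i ∈ Finset.Icc 2 n, ((i.choose 2 : ℕ) : ℤ) * t i
        = (2 : ℤ) * ((n.choose 2 : ℕ) : ℤ) := by
      rw_mod_cast [hpair]
    calc B + A = ∑ i ∈ Finset.Icc 2 n, (((i : ℤ) - 1) ^ 2 * t i + ((i : ℤ) - 1) * t i) := by
          rw [hB, hA, Finset.sum_add_distrib]
      _ = (2 : ℤ) * ∑ i ∈ Finset.Icc 2 n, ((i.choose 2 : ℕ) : ℤ) * t i := by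
          rw [Finset.mul_sum]
          apply Finset.sum_congr rfl
          intro i hi
          rw [Finset.mem_Icc] at hi
          have hc := choose_two_int i (by omega)
          nlinarith [hc]
      _ = (2 : ℤ) * ((n.choose 2 : ℕ) : ℤ) := h2
      _ = (n : ℤ) * ((n : ℤ) - 1) := by
          have := choose_two_int n (by omega)
          linarith
  -- f2 bound in ℤ
  have hAbound : 4 + 4 * A ≤ ((n : ℤ) + 1) ^ 2 := by
    have hf2' : (f2 : ℤ) = 1 + A := by
      rw [hf2, hA]
      push_cast
      congr 1
      apply Finset.sum_congr rfl
      intro i hi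
      rw [Finset.mem_Icc] at hi
      rw [Nat.cast_sub (by omega : 1 ≤ i)]
      push_cast
      ring
    have h : ((4 * f2 : ℕ) : ℤ) ≤ (((n + 1) ^ 2 : ℕ) : ℤ) := by exact_mod_cast hreal
    push_cast at h
    rw [hf2'] at h
    linarith
  -- Melchior in ℤ
  have hmelZ : 3 + S ≤ (t 2 : ℤ) := by
    have h : ((3 + ∑ i ∈ Finset.Icc 4 n, (i - 3) * t i : ℕ) : ℤ) ≤ ((t 2 : ℕ) : ℤ) := by
      exact_mod_cast hmel
    push_cast at h
    rw [hS]
    convert h using 2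
    apply Finset.sum_congr rfl
    intro i hi
    rw [Finset.mem_Icc] at hi
    rw [Nat.cast_sub (by omega : 3 ≤ i)]
    push_cast
    ring
  -- key inequality: B + t 2 ≤ 2 A + (m - 1) S
  have hkey : B + (t 2 : ℤ) ≤ 2 * A + ((m : ℤ) - 1) * S := by
    have hT2 : (t 2 : ℤ) = ∑ i ∈ Finset.Icc 2 n, (if i = 2 then (t i : ℤ) else 0) := by
      rw [Finset.sum_ite_eq' (Finset.Icc 2 n) 2 (fun i => (t i : ℤ))]
      rw [if_pos (by rw [Finset.mem_Icc]; omega)]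
    have hMS : ((m : ℤ) - 1) * S
        = ∑ i ∈ Finset.Icc 2 n, (if 4 ≤ i then ((m : ℤ) - 1) * ((i : ℤ) - 3) * t i else 0) := by
      rw [hS, Finset.mul_sum]
      rw [← Finset.sum_subset (Finset.Icc_subset_Icc_left (by omega : 2 ≤ 4))]
      · apply Finset.sum_congr rfl
        intro i hi
        rw [Finset.mem_Icc] at hi
        rw [if_pos hi.1]
        ring
      · intro i hi hni
        rw [Finset.mem_Icc] at hi
        rw [Finset.mem_Icc] at hni
        rw [if_neg (by omega)]
    rw [hB, hT2, hMS, ← Finset.sum_add_distrib]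
    have h2A : 2 * A = ∑ i ∈ Finset.Icc 2 n, 2 * ((i : ℤ) - 1) * t i := by
      rw [hA, Finset.mul_sum]; apply Finset.sum_congr rfl; intro i _; ring
    rw [h2A, ← Finset.sum_add_distrib]
    apply Finset.sum_le_sum
    intro i hi
    rw [Finset.mem_Icc] at hi
    obtain ⟨hi2, hiN⟩ := hi
    by_cases ht : t i = 0
    · simp [ht]
    have him : i ≤ m := hmax i hi2 hiN ht
    have htpos : (0 : ℤ) ≤ (t i : ℤ) := Int.natCast_nonneg _
    by_cases h4 : 4 ≤ i
    · rw [if_neg (by omega), if_pos h4]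
      have hmi : (i : ℤ) ≤ (m : ℤ) := by exact_mod_cast him
      have hi4 : (4 : ℤ) ≤ (i : ℤ) := by exact_mod_cast h4
      have hprod : (0 : ℤ) ≤ ((m : ℤ) - i) * ((i : ℤ) - 3) * t i := by
        apply mul_nonneg (mul_nonneg (by linarith) (by linarith)) htpos
      nlinarith [hprod]
    · have h23 : i = 2 ∨ i = 3 := by omega
      rcases h23 with rfl | rfl
      · rw [if_pos rfl, if_neg (by norm_num)]
        push_cast
        ring_nf
        linarith
      · rw [if_neg (by norm_num), if_neg (by norm_num)]
        push_cast
        ring_nf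
        linarith
  -- combine
  have hm2Z : (2 : ℤ) ≤ (m : ℤ) := by exact_mod_cast hm2
  have hMSle : ((m : ℤ) - 1) * S ≤ ((m : ℤ) - 1) * ((t 2 : ℤ) - 3) :=
    mul_le_mul_of_nonneg_left (by linarith [hmelZ]) (by linarith)
  have hfinal : (n : ℤ) * ((n : ℤ) - 1) + 3 * ((m : ℤ) - 1)
      ≤ 3 * A + ((m : ℤ) - 2) * (t 2 : ℤ) := by
    nlinarith [hkey, hBA, hMSle]
  -- conclude by contradiction
  by_contra hcon
  push_neg at hcon
  have hq : t 2 + 1 ≤ n / 2 := hcon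
  have hqZ : (t 2 : ℤ) + 1 ≤ ((n / 2 : ℕ) : ℤ) := by exact_mod_cast hq
  have hq2 : 2 * ((n / 2 : ℕ) : ℤ) ≤ (n : ℤ) := by
    exact_mod_cast (by omega : 2 * (n / 2) ≤ n)
  have hmZ : 2 * (m : ℤ) + 1 ≤ (n : ℤ) := by exact_mod_cast hcase
  have hn8Z : (8 : ℤ) ≤ (n : ℤ) := by exact_mod_cast (by omega : 8 ≤ n)
  obtain ⟨q, hqdef⟩ : ∃ q : ℤ, q = ((n / 2 : ℕ) : ℤ) := ⟨_, rfl⟩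
  rw [← hqdef] at hqZ hq2
  have h1 : (0 : ℤ) ≤ ((n : ℤ) - 1 - 2 * m) * ((n : ℤ) - 8) := by
    apply mul_nonneg <;> linarith
  have h2 : (0 : ℤ) ≤ ((m : ℤ) - 2) * (q - 1 - (t 2 : ℤ)) := by
    apply mul_nonneg <;> linarith
  have h3 : (0 : ℤ) ≤ ((m : ℤ) - 2) * ((n : ℤ) - 2 * q) := by
    apply mul_nonneg <;> linarith
  nlinarith [hfinal, hAbound, h1, h2, h3, hn8Z]
end

section
/- Let t : ℕ → ℕ be a t-vector with t_i = 0 for i > 6, satisfying ∑_{i≥2} C(i,2)·t_i = C(n,2), the simplicial Melchior equality t_2 = 3 + t_4 + 2t_5 + 3t_6, and 16·t_2 ≤ (n+1)² (from 4f_2 ≤ (n+1)² together with 4t_2 ≤ f_2). Then t_6 ≤ (n² + 2n - 47)/48 and, assuming additionally f_2 = 2(f_0 - 1) with f_0 = ∑_{i≥2} t_i and 4·f_2 ≤ (n+1)², also t_4 + t_5 ≤ (3n - 17)/2. -/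
theorem stmt_12 (n : ℕ) (t : ℕ → ℕ)
    (hsupp : ∀ i, 6 < i → t i = 0)
    (hpair : ∑ i ∈ Finset.Icc 2 n, Nat.choose i 2 * t i = Nat.choose n 2)
    (hmel : t 2 = 3 + t 4 + 2 * t 5 + 3 * t 6)
    (h16 : 16 * t 2 ≤ (n + 1) ^ 2)
    (f0 f2 : ℕ)
    (hf0 : f0 = ∑ i ∈ Finset.Icc 2 n, t i)
    (hf2 : f2 = 1 + ∑ i ∈ Finset.Icc 2 n, (i - 1) * t i)
    (hsimp : f2 = 2 * (f0 - 1))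
    (hreal : 4 * f2 ≤ (n + 1) ^ 2) :
    (t 6 : ℚ) ≤ ((n : ℚ) ^ 2 + 2 * n - 47) / 48 ∧
      (t 4 : ℚ) + (t 5 : ℚ) ≤ (3 * (n : ℚ) - 17) / 2 := by
  have ht2 : 3 ≤ t 2 := by omega
  have hn : 6 ≤ n := by nlinarith
  have key : ∀ g : ℕ → ℕ, (∀ i, 6 < i → g i = 0) →
      ∑ i ∈ Finset.Icc 2 n, g i = ∑ i ∈ Finset.Icc 2 6, g i := by
    intro g hg
    refine (Finset.sum_subset (Finset.Icc_subset_Icc_right hn) ?_).symm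
    intro i hi hni
    simp only [Finset.mem_Icc] at hi hni
    exact hg i (by omega)
  have hIcc : Finset.Icc 2 6 = {2, 3, 4, 5, 6} := by decide
  have hpair' : t 2 + 3 * t 3 + 6 * t 4 + 10 * t 5 + 15 * t 6 = Nat.choose n 2 := by
    rw [key _ (fun i hi => by rw [hsupp i hi, Nat.mul_zero]), hIcc] at hpair
    norm_num [Finset.sum_insert, Nat.choose] at hpair
    omega
  have hf2' : f2 = 1 + (t 2 + 2 * t 3 + 3 * t 4 + 4 * t 5 + 5 * t 6) := by
    rw [key _ (fun i hi => by rw [hsupp i hi, Nat.mul_zero]), hIcc] at hf2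
    simp [Finset.sum_insert] at hf2
    omega
  -- cast to ℚ
  have hch : ((Nat.choose n 2 : ℕ) : ℚ) = (n : ℚ) * ((n : ℚ) - 1) / 2 := by
    rw [Nat.cast_choose_two]
  have hA : (t 2 : ℚ) + 3 * t 3 + 6 * t 4 + 10 * t 5 + 15 * t 6
      = (n : ℚ) * ((n : ℚ) - 1) / 2 := by
    rw [← hch]
    exact_mod_cast congrArg (Nat.cast (R := ℚ)) hpair'
  have hM : (t 2 : ℚ) = 3 + t 4 + 2 * t 5 + 3 * t 6 := by exact_mod_cast hmel
  have hF : (f2 : ℚ) = 1 + ((t 2 : ℚ) + 2 * t 3 + 3 * t 4 + 4 * t 5 + 5 * t 6) := by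
    exact_mod_cast hf2'
  have hR : 4 * (f2 : ℚ) ≤ ((n : ℚ) + 1) ^ 2 := by exact_mod_cast hreal
  have h16' : 16 * (t 2 : ℚ) ≤ ((n : ℚ) + 1) ^ 2 := by exact_mod_cast h16
  have h3 : (0 : ℚ) ≤ (t 3 : ℚ) := Nat.cast_nonneg _
  have h4 : (0 : ℚ) ≤ (t 4 : ℚ) := Nat.cast_nonneg _
  have h5 : (0 : ℚ) ≤ (t 5 : ℚ) := Nat.cast_nonneg _
  have h6 : (0 : ℚ) ≤ (t 6 : ℚ) := Nat.cast_nonneg _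
  constructor
  · nlinarith
  · nlinarith
end

section
/- Let ε > 0 and suppose rationals n ≥ 3, t_2, t_3 satisfy t_2 ≥ ((n-5)² + 44)/16, t_3 ≤ (n² + 116n - 597)/24, and (16 + ε)·t_2 ≤ 24·t_3. Then n ≤ (2·√(254016 - 11ε² - 144ε) + 5ε + 1008)/ε and ε ≤ (72/11)·(6√15 - 1). -/
theorem stmt_15 (ε n t2 t3 : ℝ) (hε : 0 < ε) (hn : 3 ≤ n)
    (h2 : t2 ≥ ((n - 5) ^ 2 + 44) / 16)
    (h3 : t3 ≤ (n ^ 2 + 116 * n - 597) / 24)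
    (h23 : (16 + ε) * t2 ≤ 24 * t3) :
    n ≤ (2 * Real.sqrt (254016 - 11 * ε ^ 2 - 144 * ε) + 5 * ε + 1008) / ε ∧
      ε ≤ (72 / 11) * (6 * Real.sqrt 15 - 1) := by
  have hK : ε * n ^ 2 - (10 * ε + 2016) * n + (69 * ε + 10656) ≤ 0 := by
    nlinarith [mul_le_mul_of_nonneg_left h2 (by linarith : (0:ℝ) ≤ 16 + ε)]
  have hD : (0:ℝ) ≤ 254016 - 11 * ε ^ 2 - 144 * ε := by
    nlinarith [sq_nonneg (2 * ε * n - (10 * ε + 2016)), mul_le_mul_of_nonneg_left hK hε.le]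
  set s := Real.sqrt (254016 - 11 * ε ^ 2 - 144 * ε) with hs
  have hs0 : 0 ≤ s := Real.sqrt_nonneg _
  have hs2 : s ^ 2 = 254016 - 11 * ε ^ 2 - 144 * ε := Real.sq_sqrt hD
  have hsq : (ε * n - 5 * ε - 1008) ^ 2 ≤ (2 * s) ^ 2 := by
    nlinarith [mul_le_mul_of_nonneg_left hK hε.le]
  have h1 : ε * n - 5 * ε - 1008 ≤ 2 * s := by
    rcases le_or_gt (ε * n - 5 * ε - 1008) 0 with h | h
    · linarith
    · nlinarith
  constructor
  · rw [le_div_iff₀ hε]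
    linarith
  · have ht0 : 0 ≤ Real.sqrt 15 := Real.sqrt_nonneg _
    have ht2 : Real.sqrt 15 ^ 2 = 15 := Real.sq_sqrt (by norm_num)
    nlinarith [hD, ht0, ht2, hε]
end

section
/- Let n ≥ 3 and t : ℕ → ℕ satisfy ∑_{i≥2} C(i,2)·t_i = C(n,2), the simplicial Melchior equality t_2 = 3 + ∑_{i≥4}(i-3)·t_i, and 4·t_2 ≤ f_2 where f_2 = 1 + ∑_{i≥2}(i-1)·t_i. If t_3 = max_{i≥2} t_i, then t_2 ≤ (n² - n + 30)/18; and in all cases 6·max(t_2, t_3) > f_2. -/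
lemma two_mul_choose_two (i : ℕ) : 2 * Nat.choose i 2 = i * (i - 1) := by
  induction i with
  | zero => simp
  | succ k ih =>
    rw [Nat.choose_succ_succ, Nat.mul_add, Nat.choose_one_right, ih]
    rcases k with _ | m
    · simp
    · simp only [Nat.succ_sub_one]
      ring

lemma choose2_ge (i : ℕ) (hi : 4 ≤ i) : 5 * (i - 3) ≤ Nat.choose i 2 := by
  have h := two_mul_choose_two i
  obtain ⟨j, rfl⟩ : ∃ j, i = j + 4 := ⟨i - 4, by omega⟩
  have key : 10 * (j + 1) ≤ (j + 4) * (j + 3) := by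
    rcases Nat.lt_or_ge j 3 with hj | hj
    · interval_cases j <;> norm_num
    · have h3 : 3 * j ≤ j * j := Nat.mul_le_mul_right j hj
      nlinarith [h3]
  have h2 : 10 * (j + 1) ≤ 2 * Nat.choose (j + 4) 2 := by
    rw [h]
    have : j + 4 - 1 = j + 3 := by omega
    rw [this]
    exact key
  omega

theorem stmt_17 (n : ℕ) (hn : 3 ≤ n) (t : ℕ → ℕ)
    (hsupp : ∀ i, n < i → t i = 0)
    (hpair : ∑ i ∈ Finset.Icc 2 n, Nat.choose i 2 * t i = Nat.choose n 2)
    (hmel : t 2 = 3 + ∑ i ∈ Finset.Icc 4 n, (i - 3) * t i)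
    (f2 : ℕ) (hf2 : f2 = 1 + ∑ i ∈ Finset.Icc 2 n, (i - 1) * t i)
    (h4 : 4 * t 2 ≤ f2) :
    ((∀ i, 2 ≤ i → t i ≤ t 3) → (t 2 : ℚ) ≤ ((n : ℚ) ^ 2 - n + 30) / 18) ∧
      f2 < 6 * max (t 2) (t 3) := by
  have hins : Finset.Icc 2 n = insert 2 (insert 3 (Finset.Icc 4 n)) := by
    ext x; simp [Finset.mem_Icc, Finset.mem_insert]; omega
  have h2ni : (2:ℕ) ∉ insert 3 (Finset.Icc 4 n) := by simp [Finset.mem_Icc]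
  have h3ni : (3:ℕ) ∉ Finset.Icc 4 n := by simp
  have hsplit : ∀ g : ℕ → ℕ, ∑ i ∈ Finset.Icc 2 n, g i
      = g 2 + g 3 + ∑ i ∈ Finset.Icc 4 n, g i := by
    intro g
    rw [hins, Finset.sum_insert h2ni, Finset.sum_insert h3ni]
    ring
  set A := ∑ i ∈ Finset.Icc 4 n, (i - 3) * t i with hA
  set B := ∑ i ∈ Finset.Icc 4 n, Nat.choose i 2 * t i with hB
  set D := ∑ i ∈ Finset.Icc 4 n, (i - 1) * t i with hD
  have hpair' : t 2 + 3 * t 3 + B = Nat.choose n 2 := by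
    rw [← hpair, hsplit (fun i => Nat.choose i 2 * t i)]
    norm_num
    rfl
  have hf2' : f2 = 1 + (t 2 + 2 * t 3 + D) := by
    rw [hf2, hsplit (fun i => (i - 1) * t i)]
    norm_num
    rfl
  have hBA : 5 * A ≤ B := by
    rw [hA, hB, Finset.mul_sum]
    apply Finset.sum_le_sum
    intro i hi
    simp only [Finset.mem_Icc] at hi
    rw [← Nat.mul_assoc]
    exact Nat.mul_le_mul_right _ (choose2_ge i hi.1)
  have hDA : D ≤ 3 * A := by
    rw [hA, hD, Finset.mul_sum]
    apply Finset.sum_le_sum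
    intro i hi
    simp only [Finset.mem_Icc] at hi
    rw [← Nat.mul_assoc]
    exact Nat.mul_le_mul_right _ (by omega)
  constructor
  · intro hmax
    have ht23 : t 2 ≤ t 3 := hmax 2 (le_refl 2)
    have hnn : 2 * Nat.choose n 2 + n = n * n := by
      have h := two_mul_choose_two n
      obtain ⟨m, rfl⟩ : ∃ m, n = m + 1 := ⟨n - 1, by omega⟩
      simp only [Nat.add_sub_cancel] at h
      rw [h]; ring
    have key : 18 * t 2 + n ≤ n * n + 30 := by omega
    have keyQ : (18 * t 2 + n : ℚ) ≤ ((n : ℚ) * n + 30) := by exact_mod_cast key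
    rw [le_div_iff₀ (by norm_num : (0:ℚ) < 18)]
    nlinarith [keyQ]
  · have hm2 : t 2 ≤ max (t 2) (t 3) := le_max_left _ _
    have hm3 : t 3 ≤ max (t 2) (t 3) := le_max_right _ _
    omega
end
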